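/- arXiv:1510.00732 — 4 statements merged into one kernel-verified Lean document; each statement's English description precedes it below -/
import Mathlib

section
/- Every quasi-totally-bounded subset L of a metric space M is quasilocated: for every z ∈ M the greatest lower bound of {d(z,y) : y ∈ L} exists. More precisely, if for every ε > 0 there exist x₁,…,xₙ ∈ M such that each ball B_ε(xᵢ) meets L and L ⊆ ⋃ᵢ B_ε(xᵢ), then for every z ∈ M, the quantity d(z,{x₁,…,xₙ}) − ε is a lower bound for {d(z,y) : y ∈ L} and d(z,{x₁,…,xₙ}) + 2ε is not a lower bound. -/
open Metric

theorem quasiTotallyBounded_quasilocated {M : Type*} [MetricSpace M] (L : Set M)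
    (hL : ∀ ε : ℝ, 0 < ε → ∃ (n : ℕ) (x : Fin n → M), 0 < n ∧
      (∀ i, ¬ (Metric.ball (x i) ε ∩ L = ∅)) ∧ L ⊆ ⋃ i, Metric.ball (x i) ε) :
    (∀ z : M, ∃ δ : ℝ, IsGreatest (lowerBounds ((fun y => dist z y) '' L)) δ) ∧
    (∀ ε : ℝ, 0 < ε → ∀ (n : ℕ) (x : Fin n → M), 0 < n →
      (∀ i, ¬ (Metric.ball (x i) ε ∩ L = ∅)) → L ⊆ (⋃ i, Metric.ball (x i) ε) →
      ∀ z : M,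
        ((⨅ i, dist z (x i)) - ε ∈ lowerBounds ((fun y => dist z y) '' L) ∧
         (⨅ i, dist z (x i)) + 2 * ε ∉ lowerBounds ((fun y => dist z y) '' L))) := by
  -- L is nonempty
  obtain ⟨n₀, x₀, hn₀, hmeet₀, _⟩ := hL 1 one_pos
  have hi₀ : Nonempty (Fin n₀) := ⟨⟨0, hn₀⟩⟩
  obtain ⟨y₀, _, hy₀L⟩ := Set.nonempty_iff_ne_empty.mpr (hmeet₀ hi₀.some)
  constructor
  · intro z
    have hne : ((fun y => dist z y) '' L).Nonempty := ⟨dist z y₀, ⟨y₀, hy₀L, rfl⟩⟩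
    have hbd : BddBelow ((fun y => dist z y) '' L) :=
      ⟨0, by rintro _ ⟨y, _, rfl⟩; exact dist_nonneg⟩
    exact ⟨sInf _, isGLB_csInf hne hbd⟩
  · intro ε hε n x hn hmeet hcov z
    have hi : Nonempty (Fin n) := ⟨⟨0, hn⟩⟩
    have hinf_le : ∀ i, (⨅ i, dist z (x i)) ≤ dist z (x i) := fun i =>
      ciInf_le (Set.Finite.bddBelow (Set.finite_range _)) i
    obtain ⟨i, hi_min⟩ := Finite.exists_min (fun i => dist z (x i))
    have hinf_eq : (⨅ j, dist z (x j)) = dist z (x i) :=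
      le_antisymm (hinf_le i) (le_ciInf hi_min)
    constructor
    · rintro _ ⟨y, hyL, rfl⟩
      obtain ⟨_, ⟨j, rfl⟩, hyj⟩ := hcov hyL
      have : dist z (x j) ≤ dist z y + dist y (x j) := dist_triangle z y (x j)
      have hb : dist (x j) y < ε := by rwa [Metric.mem_ball, dist_comm] at hyj
      have := hinf_le j
      linarith [dist_comm y (x j) ▸ hb]
    · intro hlb
      obtain ⟨y, hy_ball, hyL⟩ := Set.nonempty_iff_ne_empty.mpr (hmeet i)
      have h1 : dist z y ≤ dist z (x i) + dist (x i) y := dist_triangle z (x i) y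
      have h2 : dist (x i) y < ε := Metric.mem_ball'.mp hy_ball
      have h3 : (⨅ j, dist z (x j)) + 2 * ε ≤ dist z y := hlb ⟨y, hyL, rfl⟩
      rw [hinf_eq] at h3
      linarith
end

section
/- Let R be a commutative ring and a = a_m X^m + ⋯ + a_0, b = b_n X^n + ⋯ + b_0 polynomials in R[X] presented with formal degrees m, n ≥ 1. If the resultant of a and b (the determinant of their (m+n)×(m+n) Sylvester matrix) is a unit in R, then a and b are comaximal in R[X] (there exist s, t with s·a + t·b = 1) and the formal leading coefficients a_m and b_n are comaximal in R. -/
/-!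
Reversing the order of rows and columns and transposing turns this Sylvester matrix into
Mathlib's `Polynomial.sylvester a b m n`, so the resultant is Mathlib's `Polynomial.resultant`.
Its adjugate then writes the resultant as `p * a + q * b`, and dividing by the unit gives
comaximality of `a` and `b`. For the leading coefficients, pass to `R ⧸ (a_m, b_n)`: there both
polynomials fall short of their formal degrees, so the resultant vanishes, i.e. it lies in the
ideal `(a_m, b_n)`, which therefore is the whole ring.
-/

open Polynomial

/-- The Sylvester matrix of `a` and `b` with respect to formal degrees `m` and `n`:
the first `n` rows carry the coefficients of `a` (from `a.coeff m` down to `a.coeff 0`),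
and the last `m` rows carry the coefficients of `b`. -/
def sylvester {R : Type*} [CommRing R] (m n : ℕ) (a b : R[X]) :
    Matrix (Fin (n + m)) (Fin (n + m)) R :=
  Matrix.of fun i j =>
    if (i : ℕ) < n then
      (if (i : ℕ) ≤ (j : ℕ) ∧ (j : ℕ) ≤ (i : ℕ) + m then a.coeff (m + (i : ℕ) - (j : ℕ)) else 0)
    else
      (if (i : ℕ) - n ≤ (j : ℕ) ∧ (j : ℕ) ≤ (i : ℕ) then b.coeff ((i : ℕ) - (j : ℕ)) else 0)

/-- The resultant of `a` and `b` with respect to formal degrees `m` and `n`. -/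
def resultant {R : Type*} [CommRing R] (m n : ℕ) (a b : R[X]) : R :=
  (sylvester m n a b).det

theorem sylvester_eq_transpose_submatrix {R : Type*} [CommRing R] (m n : ℕ) (a b : R[X]) :
    _root_.sylvester m n a b =
      ((Polynomial.sylvester a b m n).submatrix
        ((finCongr (add_comm n m)).trans Fin.revPerm)
        ((finCongr (add_comm n m)).trans Fin.revPerm)).transpose := by
  ext ⟨i, hi⟩ ⟨j, hj⟩
  simp only [Matrix.transpose_apply, Matrix.submatrix_apply, _root_.sylvester,
    Polynomial.sylvester, Matrix.of_apply, Equiv.trans_apply, finCongr_apply, Fin.revPerm_apply]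
  by_cases hin : i < n
  · have hrev : (Fin.cast (add_comm n m) ⟨i, hi⟩).rev = Fin.natAdd m ⟨n - 1 - i, by omega⟩ := by
      ext; simp only [Fin.val_rev, Fin.val_cast, Fin.val_natAdd]; omega
    rw [hrev, Fin.addCases_right]
    simp only [hin, if_true, Fin.val_rev, Fin.val_cast, Set.mem_Icc]
    split_ifs <;> first | rfl | omega | (congr 1; omega)
  · have hrev : (Fin.cast (add_comm n m) ⟨i, hi⟩).rev = Fin.castAdd n ⟨n + m - 1 - i, by omega⟩ := by
      ext; simp only [Fin.val_rev, Fin.val_cast, Fin.val_castAdd]; omega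
    rw [hrev, Fin.addCases_left]
    simp only [hin, if_false, Fin.val_rev, Fin.val_cast, Set.mem_Icc]
    split_ifs <;> first | rfl | omega | (congr 1; omega)

theorem resultant_eq_polynomial_resultant {R : Type*} [CommRing R] (m n : ℕ) (a b : R[X]) :
    _root_.resultant m n a b = a.resultant b m n := by
  rw [_root_.resultant, sylvester_eq_transpose_submatrix, Matrix.det_transpose,
    Matrix.det_submatrix_equiv_self, Polynomial.resultant]

theorem isCoprime_of_isUnit_mem_span_pair {R : Type*} [CommRing R] {x y z : R}
    (hz : IsUnit z) (hmem : z ∈ Ideal.span {x, y}) : IsCoprime x y := by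
  rw [← Ideal.isCoprime_span_singleton_iff, Ideal.isCoprime_iff_sup_eq, ← Ideal.span_insert]
  exact Ideal.eq_top_of_isUnit_mem _ hmem hz

namespace Polynomial

variable {R : Type*} [CommRing R] {f g : R[X]} {m n : ℕ}

theorem natDegree_lt_of_coeff_eq_zero (hf : f.natDegree ≤ m) (hm : m ≠ 0) (hc : f.coeff m = 0) :
    f.natDegree < m := by
  refine lt_of_le_of_ne hf fun hdeg => hm ?_
  rw [← hdeg, ← leadingCoeff, leadingCoeff_eq_zero] at hc
  rw [← hdeg, hc, natDegree_zero]

theorem isCoprime_of_isUnit_resultant (hf : f.natDegree ≤ m) (hg : g.natDegree ≤ n)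
    (hmn : m ≠ 0 ∨ n ≠ 0) (h : IsUnit (f.resultant g m n)) : IsCoprime f g := by
  obtain ⟨p, q, -, -, hpq⟩ := exists_mul_add_mul_eq_C_resultant f g hf hg hmn
  refine isCoprime_of_isUnit_mem_span_pair (h.map C) (Ideal.mem_span_pair.mpr ⟨p, q, ?_⟩)
  rw [mul_comm p, mul_comm q, hpq]

theorem resultant_mem_span_coeff (hf : f.natDegree ≤ m) (hg : g.natDegree ≤ n)
    (hm : m ≠ 0) (hn : n ≠ 0) : f.resultant g m n ∈ Ideal.span {f.coeff m, g.coeff n} := by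
  set π := Ideal.Quotient.mk (Ideal.span {f.coeff m, g.coeff n})
  have hfm : π (f.coeff m) = 0 :=
    Ideal.Quotient.eq_zero_iff_mem.mpr (Ideal.subset_span (by simp))
  have hgn : π (g.coeff n) = 0 :=
    Ideal.Quotient.eq_zero_iff_mem.mpr (Ideal.subset_span (by simp))
  rw [← Ideal.Quotient.eq_zero_iff_mem, ← resultant_map_map]
  exact resultant_eq_zero_of_lt_lt _ _ _ _
    (natDegree_lt_of_coeff_eq_zero (natDegree_map_le.trans hf) hm (by rw [coeff_map, hfm]))
    (natDegree_lt_of_coeff_eq_zero (natDegree_map_le.trans hg) hn (by rw [coeff_map, hgn]))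

end Polynomial

theorem comaximal_of_resultant_isUnit {R : Type*} [CommRing R] (m n : ℕ)
    (hm : 1 ≤ m) (hn : 1 ≤ n) (a b : R[X])
    (ha : a.degree ≤ (m : ℕ)) (hb : b.degree ≤ (n : ℕ))
    (hres : IsUnit (resultant m n a b)) :
    IsCoprime a b ∧ IsCoprime (a.coeff m) (b.coeff n) := by
  have ha' : a.natDegree ≤ m := natDegree_le_iff_degree_le.mpr ha
  have hb' : b.natDegree ≤ n := natDegree_le_iff_degree_le.mpr hb
  rw [resultant_eq_polynomial_resultant] at hres
  exact ⟨isCoprime_of_isUnit_resultant ha' hb' (.inl (by omega)) hres,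
    isCoprime_of_isUnit_mem_span_pair hres
      (resultant_mem_span_coeff ha' hb' (by omega) (by omega))⟩
end

section
/- Let R be a commutative ring and a = a_m X^m + ⋯ + a_0, b = b_n X^n + ⋯ + b_0 in R[X] with m, n ≥ 1. If a and b are comaximal in R[X] and the formal leading coefficients a_m and b_n are comaximal in R, then the resultant of a and b (with respect to formal degrees m, n) is a unit in R. -/
open Polynomial

/-!
Reduce modulo a maximal ideal `𝔪` containing the resultant. Over the field `R ⧸ 𝔪` the images of
`a` and `b` are still coprime, and comaximality of `a_m` and `b_n` keeps one of them nonzero, so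
one of the polynomials has its formal degree as its true degree. Changing the other formal degree
multiplies the resultant by a sign and a power of that nonzero leading coefficient, and the
resultant of two coprime polynomials over a field is nonzero; so the resultant is nonzero modulo `𝔪`.
-/

open scoped Matrix

namespace Polynomial

variable {R : Type*} [CommRing R]

/-- `sylvester` lists coefficients in descending order along rows, `Polynomial.sylvester` in
ascending order along columns. -/
theorem sylvester_submatrix_rev_transpose (m n : ℕ) (a b : R[X]) :
    ((_root_.sylvester m n a b).submatrix (Fin.revPerm.trans (finCongr (add_comm n m))).symm
      (Fin.revPerm.trans (finCongr (add_comm n m))).symm)ᵀ = Polynomial.sylvester a b m n := by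
  ext i j
  induction j using Fin.addCases <;>
    simp only [Polynomial.sylvester, _root_.sylvester, Set.mem_Icc, Matrix.of_apply,
      Fin.addCases_left, Fin.addCases_right, tsub_le_iff_right, Equiv.symm_trans,
      finCongr_symm, Fin.revPerm_symm, Equiv.coe_trans, Matrix.transpose_apply,
      Matrix.submatrix_apply, Function.comp_apply, finCongr_apply, Fin.cast_natAdd,
      Fin.revPerm_apply, Fin.val_rev, Fin.val_addNat, Fin.val_cast, Fin.val_castAdd] <;>
    split_ifs <;> first | rfl | omega | (congr 1; omega)

theorem _root_.resultant_eq_polynomial_resultant_s12 (m n : ℕ) (a b : R[X]) :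
    _root_.resultant m n a b = Polynomial.resultant a b m n := by
  rw [Polynomial.resultant, ← sylvester_submatrix_rev_transpose, Matrix.det_transpose,
    Matrix.det_submatrix_equiv_self, _root_.resultant]

theorem resultant_ne_zero_of_isCoprime_of_coeff_ne_zero [IsDomain R] {f g : R[X]} {m n : ℕ}
    (hf : f.natDegree ≤ m) (hg : g.natDegree ≤ n) (hfg : IsCoprime f g)
    (hcoeff : f.coeff m ≠ 0 ∨ g.coeff n ≠ 0) :
    resultant f g m n ≠ 0 := by
  rcases hcoeff with hfm | hgn
  · obtain rfl : m = f.natDegree := (natDegree_eq_of_le_of_coeff_ne_zero hf hfm).symm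
    obtain ⟨k, rfl⟩ := Nat.exists_eq_add_of_le hg
    rw [resultant_add_right_deg _ _ _ _ k le_rfl]
    exact mul_ne_zero (pow_ne_zero _ hfm) (resultant_ne_zero f g hfg)
  · obtain rfl : n = g.natDegree := (natDegree_eq_of_le_of_coeff_ne_zero hg hgn).symm
    obtain ⟨k, rfl⟩ := Nat.exists_eq_add_of_le hf
    rw [resultant_add_left_deg _ _ _ _ k le_rfl]
    exact mul_ne_zero (mul_ne_zero (pow_ne_zero _ (neg_ne_zero.mpr one_ne_zero))
      (pow_ne_zero _ hgn)) (resultant_ne_zero f g hfg)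

end Polynomial

theorem resultant_isUnit_of_comaximal_general {R : Type*} [CommRing R] (m n : ℕ)
    (a b : R[X])
    (ha : a.degree ≤ (m : ℕ)) (hb : b.degree ≤ (n : ℕ))
    (hab : IsCoprime a b) (hlead : IsCoprime (a.coeff m) (b.coeff n)) :
    IsUnit (resultant m n a b) := by
  by_contra hunit
  obtain ⟨𝔪, h𝔪, hmem⟩ := exists_max_ideal_of_mem_nonunits hunit
  let φ := Ideal.Quotient.mk 𝔪
  have hcoeff : (a.map φ).coeff m ≠ 0 ∨ (b.map φ).coeff n ≠ 0 := by
    simpa only [coeff_map] using (hlead.map φ).ne_zero_or_ne_zero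
  refine resultant_ne_zero_of_isCoprime_of_coeff_ne_zero
    (natDegree_map_le.trans (natDegree_le_of_degree_le ha))
    (natDegree_map_le.trans (natDegree_le_of_degree_le hb)) (hab.map (mapRingHom φ)) hcoeff ?_
  rw [resultant_map_map, ← resultant_eq_polynomial_resultant_s12]
  exact Ideal.Quotient.eq_zero_iff_mem.mpr hmem

theorem resultant_isUnit_of_comaximal {R : Type*} [CommRing R] (m n : ℕ)
    (hm : 1 ≤ m) (hn : 1 ≤ n) (a b : R[X])
    (ha : a.degree ≤ (m : ℕ)) (hb : b.degree ≤ (n : ℕ))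
    (hab : IsCoprime a b) (hlead : IsCoprime (a.coeff m) (b.coeff n)) :
    IsUnit (resultant m n a b) :=
  resultant_isUnit_of_comaximal_general m n a b ha hb hab hlead
end

section
/- Let R be a commutative ring, a, b ∈ R[X] with a monic of degree m ≥ 1 and b of formal degree n ≥ 1 with formal leading coefficient a unit, such that s·a + t·b = 1 for some s, t ∈ R[X]. Then s and t can be chosen with deg t < m and deg s < n. -/
/-! Replace `t` by its remainder `t %ₘ a` and `s` by `s + (t /ₘ a) * b`. Since `a` is monic,
`deg s + deg a = deg (1 - t * b) < n + deg a`, which bounds `deg s`. -/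

open Polynomial

theorem Polynomial.Monic.degree_lt_of_mul_add_mul_eq_one {R : Type*} [CommRing R]
    {a b s t : R[X]} {n : ℕ} (ha : a.Monic) (h : s * a + t * b = 1)
    (ht : t.degree < a.degree) (hb : b.degree ≤ n) (hn : 0 < n) : s.degree < n := by
  have ha_ne_bot : a.degree ≠ ⊥ := ne_bot_of_gt ht
  have hone : (1 : R[X]).degree < n + a.degree := by
    rw [degree_eq_natDegree (degree_ne_bot.mp ha_ne_bot)]
    exact degree_one_le.trans_lt (by exact_mod_cast Nat.add_pos_left hn _)
  have htb : (t * b).degree < n + a.degree :=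
    calc (t * b).degree ≤ t.degree + n := (degree_mul_le t b).trans (add_le_add_right hb _)
      _ < a.degree + n := WithBot.add_lt_add_right WithBot.coe_ne_bot ht
      _ = n + a.degree := add_comm _ _
  rw [← WithBot.add_lt_add_iff_right ha_ne_bot, ← ha.degree_mul,
    show s * a = 1 - t * b by linear_combination h]
  exact (degree_sub_le _ _).trans_lt (max_lt hone htb)

theorem bezout_degree_reduction_general {R : Type*} [CommRing R] (a b : R[X]) (m n : ℕ)
    (hn : 1 ≤ n) (ha : a.Monic) (hadeg : a.natDegree = m)
    (hb : b.degree ≤ (n : ℕ))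
    (h : ∃ s t : R[X], s * a + t * b = 1) :
    ∃ s t : R[X], s * a + t * b = 1 ∧ t.degree < (m : ℕ) ∧ s.degree < (n : ℕ) := by
  rcases subsingleton_or_nontrivial R with _ | _
  · exact ⟨0, 0, Subsingleton.elim _ _, by simp, by simp⟩
  obtain ⟨s, t, hst⟩ := h
  have hrem : (t %ₘ a).degree < a.degree := degree_modByMonic_lt t ha
  have hbezout : (s + t /ₘ a * b) * a + t %ₘ a * b = 1 := by
    linear_combination hst + b * modByMonic_add_div t a
  refine ⟨_, _, hbezout, ?_, ha.degree_lt_of_mul_add_mul_eq_one hbezout hrem hb hn⟩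
  rwa [degree_eq_natDegree ha.ne_zero, hadeg] at hrem

theorem bezout_degree_reduction {R : Type*} [CommRing R] (a b : R[X]) (m n : ℕ)
    (hm : 1 ≤ m) (hn : 1 ≤ n) (ha : a.Monic) (hadeg : a.natDegree = m)
    (hb : b.degree ≤ (n : ℕ)) (hbu : IsUnit (b.coeff n))
    (h : ∃ s t : R[X], s * a + t * b = 1) :
    ∃ s t : R[X], s * a + t * b = 1 ∧ t.degree < (m : ℕ) ∧ s.degree < (n : ℕ) :=
  bezout_degree_reduction_general a b m n hn ha hadeg hb h
end
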